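/- Let μ be a probability measure on G = (ℤ/2ℤ)³ with a_max = μ({0}) and a_max ≤ 1/4. Suppose there is a decomposition G = X₁ ⊕ X₂ (X₁ ∈ 𝔄₁, X₂ ∈ 𝔄₂, X₁ ∩ X₂ = {0}) such that: (I.1) μ(x + X₁) = 1/4 for every x ∈ X₂; and (I.2b) there is a two-element subset E ⊆ X₂ with μ(E) = μ(X₂ \ E). Then μ ∈ TEC(G). -/

import Mathlib

open scoped BigOperators

/-- The group `G = (ℤ/2ℤ)³`. -/
abbrev G : Type := ZMod 2 × ZMod 2 × ZMod 2

/-- The character pairing `(x,y) = (-1)^(x₁y₁+x₂y₂+x₃y₃)`. -/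
noncomputable def pairing (x y : G) : ℝ :=
  (-1 : ℝ) ^ (x.1.val * y.1.val + x.2.1.val * y.2.1.val + x.2.2.val * y.2.2.val)

/-- A probability measure on `G`, given by its mass function. -/
def IsProb (p : G → ℝ) : Prop := (∀ x, 0 ≤ p x) ∧ ∑ x : G, p x = 1

/-- The characteristic function `μ̂(y) = Σ_x (x,y) μ({x})`. -/
noncomputable def charFn (p : G → ℝ) (y : G) : ℝ := ∑ x : G, pairing x y * p x

/-- The measure of a set `E ⊆ G`. -/
noncomputable def measOf (p : G → ℝ) (E : Set G) : ℝ := ∑ x : G, E.indicator p x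

/-- `μ` has a trivial equivalence class: every probability measure `ν` with
`|ν̂| = |μ̂|` is a shift `μₓ` of `μ` (central symmetry is the identity on `G`). -/
def TEC (p : G → ℝ) : Prop :=
  ∀ q : G → ℝ, IsProb q → (∀ y : G, |charFn q y| = |charFn p y|) →
    ∃ x : G, ∀ e : G, q e = p (e + x)

/-- `u(E) = max_{x ∈ E} μ({x})`. -/
noncomputable def uOf (p : G → ℝ) (E : Set G) : ℝ := sSup (p '' E)

/-- `v(E) = min_{x ∈ E} μ({x})`. -/
noncomputable def vOf (p : G → ℝ) (E : Set G) : ℝ := sInf (p '' E)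

/-- `μ ∈ U(E)` iff `2 u(E) > μ(E)`. -/
def USet (p : G → ℝ) (E : Set G) : Prop := measOf p E < 2 * uOf p E

/-- `μ ∈ V(E)` iff `1/2 + 2 v(E) < μ(E)`. -/
def VSet (p : G → ℝ) (E : Set G) : Prop := 1/2 + 2 * vOf p E < measOf p E

/-!
Condition I.1 says that the image of `μ` in `G ⧸ X₁ ≅ X₂` is uniform, so `μ̂` vanishes on
`X₁^⊥ \ {0}`. Writing `X₁ = {0, g}`, for `(g, y) = -1` one gets
`μ̂(y) = ∑_{t ∈ X₂} (t, y) (2 μ{t} - 1/4)`, and I.2(b) makes this vanish for the character `y₁`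
that is constant on `E` and on `X₂ \ E`. Hence `μ̂` is supported on `0` and the three other
characters `w` with `(g, w) = -1`. These are linearly independent, so any sign change `ν̂ = ±μ̂`
on them is multiplication by a character `(x, ·)`, i.e. `ν` is the shift `μₓ`.
-/

open Finset

def bform (x y : G) : ZMod 2 := x.1 * y.1 + x.2.1 * y.2.1 + x.2.2 * y.2.2

lemma bform_comm (x y : G) : bform x y = bform y x := by
  simp only [bform]
  ring

lemma bform_add_left (x z y : G) : bform (x + z) y = bform x y + bform z y := by
  simp only [bform, Prod.fst_add, Prod.snd_add]
  ring

lemma bform_smul_left (c : ZMod 2) (x y : G) : bform (c • x) y = c * bform x y := by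
  simp only [bform, Prod.smul_fst, Prod.smul_snd, smul_eq_mul]
  ring

lemma bform_sum_left {ι : Type*} (s : Finset ι) (f : ι → G) (y : G) :
    bform (∑ i ∈ s, f i) y = ∑ i ∈ s, bform (f i) y :=
  map_sum (AddMonoidHom.mk' (bform · y) (bform_add_left · · y)) f s

lemma exists_bform_eq_one {y : G} (hy : y ≠ 0) : ∃ x, bform x y = 1 := by
  revert y
  decide

set_option synthInstance.maxSize 2000 in
lemma exists_bform_eq_one_zero_one {g a b : G} (ha : a ≠ 0) (hb : b ≠ 0) (hab : a ≠ b)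
    (hg : g ≠ 0) (hga : g ≠ a) (hgb : g ≠ b) (hgab : g ≠ a + b) :
    ∃ y, bform g y = 1 ∧ bform a y = 0 ∧ bform b y = 1 := by
  revert g a b
  decide

/-- The three `w' ≠ y₁` with `bform g w' = 1` are linearly independent, so they admit a dual
family. -/
lemma exists_bform_eq_ite_of_bform_eq_one {g y₁ : G} (h : bform g y₁ = 1) (w : G) :
    ∃ x, ∀ w' ∈ (univ.filter (bform g · = 1)).erase y₁,
      bform x w' = if w' = w then 1 else 0 := by
  revert g y₁ w
  decide

lemma exists_bform_eq_on (W : Finset G)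
    (hW : ∀ w, ∃ x, ∀ w' ∈ W, bform x w' = if w' = w then 1 else 0) (σ : G → ZMod 2) :
    ∃ x, ∀ w ∈ W, bform x w = σ w := by
  choose f hf using hW
  refine ⟨∑ w ∈ W, σ w • f w, fun w' hw' => ?_⟩
  simp [bform_sum_left, bform_smul_left, hf _ w' hw', hw']

lemma pairing_eq_neg_one_pow_bform (x y : G) : pairing x y = (-1) ^ (bform x y).val := by
  have h : ∀ x y : G, (bform x y).val =
      (x.1.val * y.1.val + x.2.1.val * y.2.1.val + x.2.2.val * y.2.2.val) % 2 := by
    decide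
  rw [pairing, neg_one_pow_eq_pow_mod_two, h]

lemma neg_one_pow_val_add {R : Type*} [Ring R] (s t : ZMod 2) :
    (-1 : R) ^ (s + t).val = (-1) ^ s.val * (-1) ^ t.val := by
  rw [ZMod.val_add, ← neg_one_pow_eq_pow_mod_two, pow_add]

lemma pairing_of_bform_eq_zero {x y : G} (h : bform x y = 0) : pairing x y = 1 := by
  simp [pairing_eq_neg_one_pow_bform, h]

lemma pairing_of_bform_eq_one {x y : G} (h : bform x y = 1) : pairing x y = -1 := by
  simp [pairing_eq_neg_one_pow_bform, h, ZMod.val_one]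

lemma pairing_comm (x y : G) : pairing x y = pairing y x := by
  rw [pairing_eq_neg_one_pow_bform, bform_comm, ← pairing_eq_neg_one_pow_bform]

lemma pairing_add_left (x z y : G) : pairing (x + z) y = pairing x y * pairing z y := by
  simp only [pairing_eq_neg_one_pow_bform, bform_add_left, neg_one_pow_val_add]

lemma pairing_zero_left (y : G) : pairing 0 y = 1 :=
  pairing_of_bform_eq_zero (by simp [bform])

lemma pairing_zero_right (x : G) : pairing x 0 = 1 :=
  pairing_of_bform_eq_zero (by simp [bform])

noncomputable def pairingChar (y : G) : AddChar G ℝ where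
  toFun x := pairing x y
  map_zero_eq_one' := pairing_zero_left y
  map_add_eq_mul' x z := pairing_add_left x z y

lemma sum_pairing_eq_zero_of_bform_eq_one {x₀ y : G} (h : bform x₀ y = 1) :
    ∑ x, pairing x y = 0 :=
  AddChar.sum_eq_zero_iff_ne_zero (ψ := pairingChar y) |>.2 <|
    AddChar.ne_zero_iff.2 ⟨x₀, by norm_num [pairingChar, pairing_of_bform_eq_one h]⟩

open scoped Classical in
lemma AddSubgroup.sum_pairing_eq_zero (H : AddSubgroup G) {t₀ y : G} (ht₀ : t₀ ∈ H)
    (h : bform t₀ y = 1) : ∑ t : H, pairing t y = 0 :=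
  AddChar.sum_eq_zero_iff_ne_zero (ψ := (pairingChar y).compAddMonoidHom H.subtype) |>.2 <|
    AddChar.ne_zero_iff.2 ⟨⟨t₀, ht₀⟩, by norm_num [pairingChar, pairing_of_bform_eq_one h]⟩

lemma sum_pairing_right (z : G) : ∑ y, pairing z y = if z = 0 then 8 else 0 := by
  split_ifs with hz
  · simp [hz, pairing_zero_left]
  · obtain ⟨y₀, hy₀⟩ := exists_bform_eq_one hz
    simp_rw [pairing_comm z]
    exact sum_pairing_eq_zero_of_bform_eq_one hy₀

lemma charFn_zero {p : G → ℝ} (hp : ∑ x, p x = 1) : charFn p 0 = 1 := by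
  simpa [charFn, pairing_zero_right] using hp

lemma sum_pairing_mul_charFn (r : G → ℝ) (z : G) :
    ∑ y, pairing z y * charFn r y = 8 * r z := by
  calc ∑ y, pairing z y * charFn r y
      = ∑ x, (∑ y, pairing (z + x) y) * r x := by
        simp only [charFn, mul_sum, sum_mul, pairing_add_left]
        rw [sum_comm]
        simp only [mul_assoc]
    _ = 8 * r z := by
        have (x : G) : z + x = 0 ↔ z = x := CharTwo.add_eq_zero
        simp [sum_pairing_right, this]

lemma eq_shift_of_charFn_eq {p q : G → ℝ} {x : G}
    (h : ∀ y, charFn q y = pairing x y * charFn p y) (e : G) : q e = p (e + x) := by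
  have := sum_pairing_mul_charFn q e
  simp only [h, ← mul_assoc, ← pairing_add_left, sum_pairing_mul_charFn] at this
  linarith

theorem tec_of_charFn_eq_zero {p : G → ℝ} (hp : ∑ x, p x = 1) (W : Finset G)
    (hW : ∀ w, ∃ x, ∀ w' ∈ W, bform x w' = if w' = w then 1 else 0)
    (hzero : ∀ y, y ≠ 0 → y ∉ W → charFn p y = 0) : TEC p := by
  classical
  intro q hq hqp
  obtain ⟨x, hx⟩ := exists_bform_eq_on W hW (fun w => if charFn q w = charFn p w then 0 else 1)
  refine ⟨x, eq_shift_of_charFn_eq fun y => ?_⟩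
  by_cases hy : y = 0
  · simp [hy, charFn_zero hp, charFn_zero hq.2, pairing_zero_right]
  by_cases hyW : y ∈ W
  · have hxy := hx y hyW
    split_ifs at hxy with hqp'
    · rw [pairing_of_bform_eq_zero hxy, hqp', one_mul]
    · rw [pairing_of_bform_eq_one hxy, neg_one_mul]
      exact (abs_eq_abs.1 (hqp y)).resolve_left hqp'
  · have hpy := hzero y hy hyW
    have hqy := hqp y
    rw [hpy, abs_zero, abs_eq_zero] at hqy
    rw [hpy, hqy, mul_zero]

lemma AddSubgroup.exists_coe_eq_pair {A : Type*} [AddGroup A] (H : AddSubgroup A)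
    (hH : Nat.card H = 2) : ∃ g ≠ 0, (H : Set A) = {0, g} := by
  obtain ⟨⟨g, hgH⟩, hg, huniq⟩ := (Nat.card_eq_two_iff' (0 : H)).1 hH
  refine ⟨g, fun h => hg (Subtype.ext h), Set.ext fun w => ⟨fun hw => ?_, ?_⟩⟩
  · by_cases hw0 : w = 0
    · exact Or.inl hw0
    · exact Or.inr (congrArg Subtype.val (huniq ⟨w, hw⟩ fun h => hw0 (congrArg Subtype.val h)))
  · rintro (rfl | rfl)
    exacts [H.zero_mem, hgH]

set_option synthInstance.maxSize 2000 in
lemma nodup_translate_four {e a b : G} (ha : a ≠ 0) (hb : b ≠ 0) (hab : a ≠ b) :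
    [e, e + a, e + b, e + a + b].Nodup := by
  revert e a b
  decide

lemma measOf_pair (p : G → ℝ) {s t : G} (h : s ≠ t) : measOf p {s, t} = p s + p t := by
  classical
  rw [measOf, ← coe_pair, sum_indicator_subset _ (subset_univ _), sum_pair h]

lemma measOf_diff (p : G → ℝ) {E F : Set G} (h : E ⊆ F) :
    measOf p (F \ E) = measOf p F - measOf p E := by
  simp [measOf, Set.indicator_sdiff h, sum_sub_distrib]

section Complement

open scoped Classical

variable {H : AddSubgroup G}

lemma measOf_addSubgroup (p : G → ℝ) : measOf p H = ∑ t : H, p t := by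
  rw [measOf, ← sum_subtype (univ.filter (· ∈ H)) (by simp) p]
  simp [Set.indicator_apply, sum_filter]

lemma AddSubgroup.sum_eq_of_card_eq_four (hH : Nat.card H = 4) {e a b : G} (he : e ∈ H)
    (ha : a ∈ H) (hb : b ∈ H) (ha0 : a ≠ 0) (hb0 : b ≠ 0) (hab : a ≠ b) (f : G → ℝ) :
    ∑ t : H, f t = f e + f (e + a) + f (e + b) + f (e + a + b) := by
  have hnodup := nodup_translate_four (e := e) ha0 hb0 hab
  have hS : [e, e + a, e + b, e + a + b].toFinset = univ.filter (· ∈ H) := by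
    refine eq_of_subset_of_card_le (fun x hx => ?_) ?_
    · simp only [List.mem_toFinset, List.mem_cons, List.not_mem_nil, or_false] at hx
      rcases hx with rfl | rfl | rfl | rfl <;> simp [add_mem, he, ha, hb]
    · rw [List.toFinset_card_of_nodup hnodup, ← Fintype.card_subtype, Fintype.card_eq_nat_card,
        hH]
      rfl
  rw [← sum_subtype (univ.filter (· ∈ H)) (by simp) f, ← hS, List.sum_toFinset _ hnodup]
  simp [add_assoc]

lemma AddSubgroup.exists_add_eq_add_of_measOf_eq {p : G → ℝ} (hH : Nat.card H = 4) {E : Set G}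
    (hEH : E ⊆ H) (hE2 : E.ncard = 2) (hE : measOf p E = measOf p ((H : Set G) \ E)) :
    ∃ e ∈ H, ∃ a ∈ H, ∃ b ∈ H, a ≠ 0 ∧ b ≠ 0 ∧ a ≠ b ∧
      p e + p (e + a) = p (e + b) + p (e + a + b) := by
  obtain ⟨e, e', hee', rfl⟩ := Set.ncard_eq_two.1 hE2
  obtain ⟨a, rfl⟩ : ∃ a, e' = e + a := ⟨e + e', (CharTwo.add_cancel_left e e').symm⟩
  obtain ⟨he, hea⟩ := Set.insert_subset_iff.1 hEH
  have ha : a ∈ H := (add_mem_cancel_left he).1 (hea rfl)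
  have ha0 : a ≠ 0 := fun h => hee' (by simp [h])
  obtain ⟨b, hb, hb'⟩ := Set.exists_mem_notMem_of_ncard_lt_ncard (s := {0, a}) (t := H) <| by
    rw [Set.ncard_pair ha0.symm, ← Nat.card_coe_set_eq, SetLike.coe_sort_coe, hH]
    norm_num
  obtain ⟨hb0, hab⟩ : b ≠ 0 ∧ a ≠ b := by simpa [eq_comm] using hb'
  refine ⟨e, he, a, ha, b, hb, ha0, hb0, hab, ?_⟩
  rw [measOf_diff p hEH, measOf_addSubgroup, H.sum_eq_of_card_eq_four hH he ha hb ha0 hb0 hab,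
    measOf_pair p hee'] at hE
  linarith

variable {g : G}

lemma bijective_sumElim_add_of_notMem (hg : g ∉ H) (hH : Nat.card H = 4) :
    Function.Bijective (Sum.elim (fun t : H => (t : G)) (fun t : H => (t : G) + g)) := by
  rw [Fintype.bijective_iff_injective_and_card]
  refine ⟨?_, by simp [← Nat.card_eq_fintype_card, hH]⟩
  rintro (s | s) (t | t) h <;> simp only [Sum.elim_inl, Sum.elim_inr] at h
  · exact congrArg _ (Subtype.ext h)
  · exact absurd (by simpa [h] using sub_mem s.2 t.2) hg
  · exact absurd (by simpa [← h] using sub_mem t.2 s.2) hg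
  · exact congrArg _ (Subtype.ext (add_right_cancel h))

lemma sum_eq_sum_add_of_notMem (hg : g ∉ H) (hH : Nat.card H = 4) (F : G → ℝ) :
    ∑ x, F x = ∑ t : H, (F t + F (t + g)) := by
  rw [← (bijective_sumElim_add_of_notMem hg hH).sum_comp, Fintype.sum_sum_type,
    sum_add_distrib]
  rfl

lemma exists_mem_bform_eq_one (hg : g ∉ H) (hH : Nat.card H = 4) {y : G} (hy : y ≠ 0)
    (hgy : bform g y = 0) : ∃ t ∈ H, bform t y = 1 := by
  obtain ⟨x, hx⟩ := exists_bform_eq_one hy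
  obtain ⟨t | t, rfl⟩ := (bijective_sumElim_add_of_notMem hg hH).2 x
  · exact ⟨t, t.2, hx⟩
  · exact ⟨t, t.2, by simpa [bform_add_left, hgy] using hx⟩

variable {p : G → ℝ}

lemma charFn_eq_sum_addSubgroup (hg : g ∉ H) (hH : Nat.card H = 4) (y : G) :
    charFn p y = ∑ t : H, pairing t y * (p t + pairing g y * p (t + g)) := by
  rw [charFn, sum_eq_sum_add_of_notMem hg hH]
  refine sum_congr rfl fun t _ => ?_
  rw [pairing_add_left]
  ring

lemma charFn_eq_zero_of_bform_eq_zero (hg : g ∉ H) (hH : Nat.card H = 4)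
    (hcoset : ∀ t ∈ H, p t + p (t + g) = 1 / 4) {y : G} (hy : y ≠ 0) (hgy : bform g y = 0) :
    charFn p y = 0 := by
  obtain ⟨t₀, ht₀, ht₀y⟩ := exists_mem_bform_eq_one hg hH hy hgy
  calc charFn p y = 1 / 4 * ∑ t : H, pairing t y := by
        rw [charFn_eq_sum_addSubgroup hg hH, pairing_of_bform_eq_zero hgy, mul_sum]
        refine sum_congr rfl fun t _ => ?_
        rw [one_mul, hcoset t t.2]
        ring
    _ = 0 := by rw [H.sum_pairing_eq_zero ht₀ ht₀y, mul_zero]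

lemma charFn_eq_zero_of_bform_eq_one (hg : g ∉ H) (hH : Nat.card H = 4)
    (hcoset : ∀ t ∈ H, p t + p (t + g) = 1 / 4) {e a b : G} (he : e ∈ H) (ha : a ∈ H)
    (hb : b ∈ H) (ha0 : a ≠ 0) (hb0 : b ≠ 0) (hab : a ≠ b)
    (hbal : p e + p (e + a) = p (e + b) + p (e + a + b)) {y : G} (hgy : bform g y = 1)
    (hay : bform a y = 0) (hby : bform b y = 1) : charFn p y = 0 := by
  have hcoset' (t : H) : p t + pairing g y * p (t + g) = 2 * p t - 1 / 4 := by
    rw [pairing_of_bform_eq_one hgy]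
    linarith [hcoset t t.2]
  rw [charFn_eq_sum_addSubgroup hg hH, sum_congr rfl fun t _ => by rw [hcoset' t],
    H.sum_eq_of_card_eq_four hH he ha hb ha0 hb0 hab fun t => pairing t y * (2 * p t - 1 / 4)]
  simp only [pairing_add_left, pairing_of_bform_eq_zero hay, pairing_of_bform_eq_one hby]
  linear_combination 2 * pairing e y * hbal

lemma exists_notMem_forall_add_eq {X₁ X₂ : AddSubgroup G} (hX₁ : Nat.card X₁ = 2)
    (hinf : X₁ ⊓ X₂ = ⊥) (hI1 : ∀ x ∈ X₂, measOf p ((x + ·) '' (X₁ : Set G)) = 1 / 4) :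
    ∃ g ∉ X₂, ∀ t ∈ X₂, p t + p (t + g) = 1 / 4 := by
  obtain ⟨g, hg0, hX₁g⟩ := X₁.exists_coe_eq_pair hX₁
  refine ⟨g, fun hg => hg0 ?_, fun t ht => ?_⟩
  · have : g ∈ X₁ ⊓ X₂ := ⟨by simp [hX₁g], hg⟩
    rwa [hinf, AddSubgroup.mem_bot] at this
  · rw [← hI1 t ht, hX₁g, Set.image_pair, add_zero, measOf_pair p (by simpa using hg0)]

end Complement

theorem stmt1_general (p : G → ℝ) (hp : IsProb p)
    (X₁ X₂ : AddSubgroup G) (hX₁ : Nat.card X₁ = 2) (hX₂ : Nat.card X₂ = 4)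
    (hinf : X₁ ⊓ X₂ = ⊥)
    (hI1 : ∀ x ∈ X₂, measOf p ((x + ·) '' (X₁ : Set G)) = 1/4)
    (hI2b : ∃ E ⊆ (X₂ : Set G), E.ncard = 2 ∧
      measOf p E = measOf p ((X₂ : Set G) \ E)) :
    TEC p := by
  obtain ⟨g, hg, hcoset⟩ := exists_notMem_forall_add_eq hX₁ hinf hI1
  obtain ⟨E, hEX₂, hE2, hE⟩ := hI2b
  obtain ⟨e, he, a, ha, b, hb, ha0, hb0, hab, hbal⟩ :=
    X₂.exists_add_eq_add_of_measOf_eq hX₂ hEX₂ hE2 hE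
  obtain ⟨y₁, hgy₁, hay₁, hby₁⟩ := exists_bform_eq_one_zero_one (g := g) ha0 hb0 hab
    (fun h => hg (h ▸ X₂.zero_mem)) (fun h => hg (h ▸ ha)) (fun h => hg (h ▸ hb))
    (fun h => hg (h ▸ add_mem ha hb))
  refine tec_of_charFn_eq_zero hp.2 _ (exists_bform_eq_ite_of_bform_eq_one hgy₁)
    fun y hy hyW => ?_
  by_cases hgy : bform g y = 0
  · exact charFn_eq_zero_of_bform_eq_zero hg hX₂ hcoset hy hgy
  · obtain rfl : y = y₁ := by
      by_contra hne
      exact hyW (mem_erase.2 ⟨hne, mem_filter.2 ⟨mem_univ _, Fin.eq_one_of_ne_zero _ hgy⟩⟩)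
    exact charFn_eq_zero_of_bform_eq_one hg hX₂ hcoset he ha hb ha0 hb0 hab hbal hgy₁ hay₁ hby₁

/-- `a_max = μ({0}) ≤ 1/4`, with a decomposition `G = X₁ ⊕ X₂` satisfying
I.1 and I.2(b), implies `μ ∈ TEC(G)`. -/
theorem stmt1 (p : G → ℝ) (hp : IsProb p)
    (hmax : ∀ x : G, p x ≤ p 0) (hle : p 0 ≤ 1/4)
    (X₁ X₂ : AddSubgroup G) (hX₁ : Nat.card X₁ = 2) (hX₂ : Nat.card X₂ = 4)
    (hinf : X₁ ⊓ X₂ = ⊥) (hsup : X₁ ⊔ X₂ = ⊤)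
    (hI1 : ∀ x ∈ X₂, measOf p ((x + ·) '' (X₁ : Set G)) = 1/4)
    (hI2b : ∃ E ⊆ (X₂ : Set G), E.ncard = 2 ∧
      measOf p E = measOf p ((X₂ : Set G) \ E)) :
    TEC p :=
  stmt1_general p hp X₁ X₂ hX₁ hX₂ hinf hI1 hI2b
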